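/- Let u : T² → ℝ be a function on the 2-torus of class H². Then there is a constant C, independent of u, such that ‖u‖_{L∞} ≤ C ‖u‖_{L²}^{1/2} ‖u‖_{H²}^{1/2} (two-dimensional Agmon inequality). -/

import Mathlib

open MeasureTheory

noncomputable section

/-- The fundamental domain of the torus `T² = ℝ²/ℤ²`. -/
def box2 : Set (Fin 2 → ℝ) := Set.univ.pi fun _ => Set.Ico (0 : ℝ) 1

/-- A function on `ℝ²` descends to the torus `T² = ℝ²/ℤ²` iff it is `ℤ²`-periodic. -/
def IsPeriodic2 {V : Type*} (u : (Fin 2 → ℝ) → V) : Prop :=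
  ∀ (x : Fin 2 → ℝ) (k : Fin 2 → ℤ), u (x + fun i => (k i : ℝ)) = u x

/-- The `L²(T²)` norm. -/
def L2Norm2 (u : (Fin 2 → ℝ) → ℝ) : ℝ := (∫ x in box2, (u x) ^ 2) ^ ((1 : ℝ) / 2)

/-- The `H²(T²)` norm. -/
def H2Norm2 (u : (Fin 2 → ℝ) → ℝ) : ℝ :=
  (∑ k ∈ Finset.range 3, ∫ x in box2, ‖iteratedFDeriv ℝ k u x‖ ^ 2) ^ ((1 : ℝ) / 2)

/-- The `L∞(T²)` norm (for continuous periodic functions). -/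
def LinfNorm2 (u : (Fin 2 → ℝ) → ℝ) : ℝ := ⨆ x : Fin 2 → ℝ, |u x|

/-!
Applying the one-dimensional bound `|f x| ≤ ∫₀¹ |f| + ∫₀¹ |f'|` first in `x` and then in `y`
bounds `u(x, y)²` by the integrals over the unit square of `|u²|`, `|∂₁(u²)|`, `|∂₂(u²)|` and
`|∂₂∂₁(u²)|`. By Cauchy–Schwarz these are sums of products of two `L²` norms taken from `u`,
`∂ᵢu`, `∂₂∂₁u`. Each such product is at most `‖u‖_{L²} ‖u‖_{H²}`: for the product `‖∂₁u‖ ‖∂₂u‖`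
this uses periodicity, through the integration by parts `‖∂ᵢu‖² = -∫ u ∂ᵢ²u ≤ ‖u‖ ‖∂ᵢ²u‖`.
Altogether `u(x, y)² ≤ 9 ‖u‖_{L²} ‖u‖_{H²}`.
-/

open Set

theorem abs_le_intervalIntegral_abs_add_intervalIntegral_abs_deriv {f f' : ℝ → ℝ}
    (hf : ∀ t, HasDerivAt f (f' t) t) (hf' : Continuous f') {x : ℝ} (hx : x ∈ Icc (0 : ℝ) 1) :
    |f x| ≤ (∫ t in (0 : ℝ)..1, |f t|) + ∫ t in (0 : ℝ)..1, |f' t| := by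
  have hfc : Continuous f := continuous_iff_continuousAt.2 fun t => (hf t).continuousAt
  have hosc : ∀ t ∈ Icc (0 : ℝ) 1, |f x| ≤ |f t| + ∫ s in (0 : ℝ)..1, |f' s| := by
    intro t ht
    have hsub : uIoc t x ⊆ Ioc 0 1 := Ioc_subset_Ioc (le_min ht.1 hx.1) (max_le ht.2 hx.2)
    calc |f x| ≤ |f t| + |f x - f t| := by simpa using abs_add_le (f t) (f x - f t)
      _ = |f t| + ‖∫ s in t..x, f' s‖ := by
          rw [intervalIntegral.integral_eq_sub_of_hasDerivAt (fun s _ => hf s)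
            (hf'.intervalIntegrable _ _), Real.norm_eq_abs]
      _ ≤ |f t| + ∫ s in uIoc t x, ‖f' s‖ := by
          gcongr; exact intervalIntegral.norm_integral_le_integral_norm_uIoc
      _ ≤ |f t| + ∫ s in (0 : ℝ)..1, |f' s| := by
          rw [intervalIntegral.integral_of_le zero_le_one]
          gcongr
          exact setIntegral_mono_set (hf'.norm.integrableOn_Icc.mono_set Ioc_subset_Icc_self)
            (.of_forall fun _ => norm_nonneg _) hsub.eventuallyLE
  calc |f x| = ∫ _ in (0 : ℝ)..1, |f x| := by simp
    _ ≤ ∫ t in (0 : ℝ)..1, (|f t| + ∫ s in (0 : ℝ)..1, |f' s|) :=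
        intervalIntegral.integral_mono_on zero_le_one intervalIntegrable_const
          ((hfc.abs.intervalIntegrable _ _).add intervalIntegrable_const) hosc
    _ = _ := by
        rw [intervalIntegral.integral_add (hfc.abs.intervalIntegrable _ _) intervalIntegrable_const]
        simp

theorem intervalIntegral_deriv_sq_eq_neg {f f' f'' : ℝ → ℝ} (hf : ∀ t, HasDerivAt f (f' t) t)
    (hf' : ∀ t, HasDerivAt f' (f'' t) t) (hf'' : Continuous f'') (h1 : f 1 = f 0)
    (h1' : f' 1 = f' 0) :
    ∫ t in (0 : ℝ)..1, f' t ^ 2 = -∫ t in (0 : ℝ)..1, f t * f'' t := by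
  have hf'c : Continuous f' := continuous_iff_continuousAt.2 fun t => (hf' t).continuousAt
  have hparts := intervalIntegral.integral_mul_deriv_eq_deriv_mul (a := 0) (b := 1)
    (fun t _ => hf t) (fun t _ => hf' t) (hf'c.intervalIntegrable _ _) (hf''.intervalIntegrable _ _)
  simp only [sq, hparts, h1, h1', sub_self, zero_sub, neg_neg]

theorem box2_subset_Icc : box2 ⊆ Icc 0 1 :=
  fun _ hx => ⟨fun i => (hx i trivial).1, fun i => (hx i trivial).2.le⟩

theorem measurableSet_box2 : MeasurableSet box2 :=
  MeasurableSet.univ_pi fun _ => measurableSet_Ico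

theorem Continuous.integrableOn_box2 {g : (Fin 2 → ℝ) → ℝ} (hg : Continuous g) :
    IntegrableOn g box2 :=
  hg.integrableOn_Icc.mono_set box2_subset_Icc

theorem continuous_vec_two : Continuous fun p : ℝ × ℝ => (![p.1, p.2] : Fin 2 → ℝ) := by
  fun_prop

theorem setIntegral_box2_eq {g : (Fin 2 → ℝ) → ℝ} (hg : Continuous g) :
    ∫ z in box2, g z = ∫ s in (0 : ℝ)..1, ∫ t in (0 : ℝ)..1, g ![s, t] := by
  have hbox : box2 = MeasurableEquiv.finTwoArrow.symm '' (Ico (0 : ℝ) 1 ×ˢ Ico (0 : ℝ) 1) := by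
    rw [MeasurableEquiv.image_symm]
    ext x
    simp [box2, Fin.forall_fin_two]
  rw [hbox, (volume_preserving_finTwoArrow ℝ).symm.setIntegral_image_emb
    (MeasurableEquiv.measurableEmbedding _), Measure.volume_eq_prod, setIntegral_prod]
  · simp only [intervalIntegral.integral_of_le zero_le_one, integral_Ico_eq_integral_Ioc]
    rfl
  · rw [← Measure.volume_eq_prod]
    exact ((hg.comp continuous_vec_two).continuousOn.integrableOn_compact
      (isCompact_Icc.prod isCompact_Icc)).mono_set
      (prod_mono Ico_subset_Icc_self Ico_subset_Icc_self)

theorem setIntegral_box2_eq_swap {g : (Fin 2 → ℝ) → ℝ} (hg : Continuous g) :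
    ∫ z in box2, g z = ∫ t in (0 : ℝ)..1, ∫ s in (0 : ℝ)..1, g ![s, t] := by
  rw [setIntegral_box2_eq hg, intervalIntegral_intervalIntegral_swap]
  exact ((hg.comp continuous_vec_two).continuousOn.integrableOn_compact
    (isCompact_Icc.prod isCompact_Icc)).mono_set (prod_mono uIoc_subset_uIcc uIoc_subset_uIcc)

theorem setIntegral_box2_abs_add_le {f g : (Fin 2 → ℝ) → ℝ} (hf : Continuous f)
    (hg : Continuous g) :
    ∫ z in box2, |f z + g z| ≤ (∫ z in box2, |f z|) + ∫ z in box2, |g z| :=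
  (setIntegral_mono_on (hf.add hg).abs.integrableOn_box2
    (hf.abs.add hg.abs).integrableOn_box2 measurableSet_box2 fun _ _ => abs_add_le _ _).trans_eq
    (integral_add hf.abs.integrableOn_box2 hg.abs.integrableOn_box2)

theorem intervalIntegral_le_setIntegral_box2_add {φ : ℝ → ℝ} {A B : (Fin 2 → ℝ) → ℝ}
    (hφ : Continuous φ) (hA : Continuous A) (hB : Continuous B)
    (h : ∀ s, φ s ≤ (∫ t in (0 : ℝ)..1, A ![s, t]) + ∫ t in (0 : ℝ)..1, B ![s, t]) :
    ∫ s in (0 : ℝ)..1, φ s ≤ (∫ z in box2, A z) + ∫ z in box2, B z := by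
  have hslice {C : (Fin 2 → ℝ) → ℝ} (hC : Continuous C) :
      Continuous fun s => ∫ t in (0 : ℝ)..1, C ![s, t] := by fun_prop
  rw [setIntegral_box2_eq hA, setIntegral_box2_eq hB, ← intervalIntegral.integral_add
    ((hslice hA).intervalIntegrable _ _) ((hslice hB).intervalIntegrable _ _)]
  exact intervalIntegral.integral_mono_on zero_le_one (hφ.intervalIntegrable _ _)
    (((hslice hA).add (hslice hB)).intervalIntegrable _ _) fun s _ => h s

theorem abs_le_setIntegral_box2_of_hasDerivAt {G G₁ G₂ G₁₂ : (Fin 2 → ℝ) → ℝ}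
    (hG : Continuous G) (hG₁ : Continuous G₁) (hG₂ : Continuous G₂) (hG₁₂ : Continuous G₁₂)
    (hd₁ : ∀ s t, HasDerivAt (fun s => G ![s, t]) (G₁ ![s, t]) s)
    (hd₂ : ∀ s t, HasDerivAt (fun t => G ![s, t]) (G₂ ![s, t]) t)
    (hd₁₂ : ∀ s t, HasDerivAt (fun t => G₁ ![s, t]) (G₁₂ ![s, t]) t)
    {x y : ℝ} (hx : x ∈ Icc (0 : ℝ) 1) (hy : y ∈ Icc (0 : ℝ) 1) :
    |G ![x, y]| ≤ (∫ z in box2, |G z|) + (∫ z in box2, |G₂ z|) +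
      ((∫ z in box2, |G₁ z|) + ∫ z in box2, |G₁₂ z|) := by
  have hfst {C : (Fin 2 → ℝ) → ℝ} (hC : Continuous C) : Continuous fun s => C ![s, y] := by
    fun_prop
  have hsnd {C : (Fin 2 → ℝ) → ℝ} (hC : Continuous C) (s : ℝ) :
      Continuous fun t => C ![s, t] := by fun_prop
  calc |G ![x, y]| ≤ (∫ s in (0 : ℝ)..1, |G ![s, y]|) + ∫ s in (0 : ℝ)..1, |G₁ ![s, y]| :=
        abs_le_intervalIntegral_abs_add_intervalIntegral_abs_deriv (hd₁ · y) (hfst hG₁) hx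
    _ ≤ _ := add_le_add
        (intervalIntegral_le_setIntegral_box2_add (hfst hG).abs hG.abs hG₂.abs fun s =>
          abs_le_intervalIntegral_abs_add_intervalIntegral_abs_deriv (hd₂ s) (hsnd hG₂ s) hy)
        (intervalIntegral_le_setIntegral_box2_add (hfst hG₁).abs hG₁.abs hG₁₂.abs fun s =>
          abs_le_intervalIntegral_abs_add_intervalIntegral_abs_deriv (hd₁₂ s) (hsnd hG₁₂ s) hy)

theorem setIntegral_box2_sq_eq_neg_of_hasDerivAt_fst {G G' G'' : (Fin 2 → ℝ) → ℝ}
    (hG : Continuous G) (hG' : Continuous G') (hG'' : Continuous G'')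
    (hd : ∀ s t, HasDerivAt (fun s => G ![s, t]) (G' ![s, t]) s)
    (hd' : ∀ s t, HasDerivAt (fun s => G' ![s, t]) (G'' ![s, t]) s)
    (hper : ∀ t, G ![1, t] = G ![0, t]) (hper' : ∀ t, G' ![1, t] = G' ![0, t]) :
    ∫ z in box2, G' z ^ 2 = -∫ z in box2, G z * G'' z := by
  rw [setIntegral_box2_eq_swap (hG'.fun_pow 2), setIntegral_box2_eq_swap (hG.fun_mul hG''),
    ← intervalIntegral.integral_neg]
  exact intervalIntegral.integral_congr fun t _ =>
    intervalIntegral_deriv_sq_eq_neg (hd · t) (hd' · t) (by fun_prop) (hper t) (hper' t)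

theorem setIntegral_box2_sq_eq_neg_of_hasDerivAt_snd {G G' G'' : (Fin 2 → ℝ) → ℝ}
    (hG : Continuous G) (hG' : Continuous G') (hG'' : Continuous G'')
    (hd : ∀ s t, HasDerivAt (fun t => G ![s, t]) (G' ![s, t]) t)
    (hd' : ∀ s t, HasDerivAt (fun t => G' ![s, t]) (G'' ![s, t]) t)
    (hper : ∀ s, G ![s, 1] = G ![s, 0]) (hper' : ∀ s, G' ![s, 1] = G' ![s, 0]) :
    ∫ z in box2, G' z ^ 2 = -∫ z in box2, G z * G'' z := by
  rw [setIntegral_box2_eq (hG'.fun_pow 2), setIntegral_box2_eq (hG.fun_mul hG''),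
    ← intervalIntegral.integral_neg]
  exact intervalIntegral.integral_congr fun s _ =>
    intervalIntegral_deriv_sq_eq_neg (hd s) (hd' s) (by fun_prop) (hper s) (hper' s)

theorem L2Norm2_eq_sqrt (f : (Fin 2 → ℝ) → ℝ) : L2Norm2 f = √(∫ z in box2, f z ^ 2) := by
  rw [L2Norm2, Real.sqrt_eq_rpow]

theorem L2Norm2_nonneg (f : (Fin 2 → ℝ) → ℝ) : 0 ≤ L2Norm2 f := by
  rw [L2Norm2_eq_sqrt]; positivity

theorem sq_L2Norm2 (f : (Fin 2 → ℝ) → ℝ) : L2Norm2 f ^ 2 = ∫ z in box2, f z ^ 2 := by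
  rw [L2Norm2_eq_sqrt, Real.sq_sqrt (setIntegral_nonneg measurableSet_box2 fun _ _ => sq_nonneg _)]

theorem L2Norm2_le_of_abs_le {f g : (Fin 2 → ℝ) → ℝ} (hg : Continuous g)
    (h : ∀ z, |f z| ≤ |g z|) : L2Norm2 f ≤ L2Norm2 g := by
  rw [L2Norm2_eq_sqrt, L2Norm2_eq_sqrt]
  refine Real.sqrt_le_sqrt (integral_mono_of_nonneg (.of_forall fun _ => sq_nonneg _)
    (hg.pow 2).integrableOn_box2 (.of_forall fun z => ?_))
  simpa only [sq_abs] using pow_le_pow_left₀ (abs_nonneg _) (h z) 2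

theorem setIntegral_box2_abs_mul_le {f g : (Fin 2 → ℝ) → ℝ} (hf : Continuous f)
    (hg : Continuous g) : ∫ z in box2, |f z * g z| ≤ L2Norm2 f * L2Norm2 g := by
  have memLp {h : (Fin 2 → ℝ) → ℝ} (hh : Continuous h) :
      MemLp h (ENNReal.ofReal 2) (volume.restrict box2) := by
    rw [ENNReal.ofReal_ofNat, memLp_two_iff_integrable_sq hh.aestronglyMeasurable]
    exact (hh.pow 2).integrableOn_box2
  simpa [L2Norm2, abs_mul] using integral_mul_norm_le_Lp_mul_Lq (μ := volume.restrict box2)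
    Real.HolderConjugate.two_two (memLp hf) (memLp hg)

theorem sq_L2Norm2_le_of_setIntegral_sq_eq_neg {f g h : (Fin 2 → ℝ) → ℝ} (hg : Continuous g)
    (hh : Continuous h) (heq : ∫ z in box2, f z ^ 2 = -∫ z in box2, g z * h z) :
    L2Norm2 f ^ 2 ≤ L2Norm2 g * L2Norm2 h := by
  rw [sq_L2Norm2, heq]
  exact (neg_le_abs _).trans (abs_integral_le_integral_abs.trans
    (setIntegral_box2_abs_mul_le hg hh))

theorem L2Norm2_norm_iteratedFDeriv_le_H2Norm2 (u : (Fin 2 → ℝ) → ℝ) {k : ℕ} (hk : k < 3) :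
    L2Norm2 (fun z => ‖iteratedFDeriv ℝ k u z‖) ≤ H2Norm2 u := by
  rw [L2Norm2_eq_sqrt, H2Norm2, ← Real.sqrt_eq_rpow]
  exact Real.sqrt_le_sqrt <| Finset.single_le_sum
    (f := fun j => ∫ z in box2, ‖iteratedFDeriv ℝ j u z‖ ^ 2)
    (fun _ _ => setIntegral_nonneg measurableSet_box2 fun _ _ => sq_nonneg _)
    (Finset.mem_range.2 hk)

theorem L2Norm2_le_H2Norm2 (u : (Fin 2 → ℝ) → ℝ) : L2Norm2 u ≤ H2Norm2 u := by
  simpa [L2Norm2] using L2Norm2_norm_iteratedFDeriv_le_H2Norm2 u (k := 0) (by norm_num)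

section Calculus

variable {E F : Type*} [NormedAddCommGroup E] [NormedSpace ℝ E] [NormedAddCommGroup F]
  [NormedSpace ℝ F]

theorem ContDiff.hasFDerivAt_fderiv {f : E → F} (hf : ContDiff ℝ 2 f) (z : E) :
    HasFDerivAt (fderiv ℝ f) (fderiv ℝ (fderiv ℝ f) z) z :=
  ((hf.fderiv_right (m := 1) le_rfl).differentiable one_ne_zero z).hasFDerivAt

theorem ContDiff.continuous_fderiv_apply_const {f : E → F} (hf : ContDiff ℝ 1 f) (v : E) :
    Continuous fun z => fderiv ℝ f z v :=
  (hf.continuous_fderiv one_ne_zero).clm_apply continuous_const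

theorem ContDiff.continuous_fderiv_fderiv_apply_const {f : E → F} (hf : ContDiff ℝ 2 f)
    (v w : E) : Continuous fun z => fderiv ℝ (fderiv ℝ f) z v w :=
  (((hf.fderiv_right (m := 1) le_rfl).continuous_fderiv one_ne_zero).clm_apply
    continuous_const).clm_apply continuous_const

theorem norm_fderiv_fderiv_apply_le (f : E → F) {x v w : E} (hv : ‖v‖ ≤ 1) (hw : ‖w‖ ≤ 1) :
    ‖fderiv ℝ (fderiv ℝ f) x v w‖ ≤ ‖iteratedFDeriv ℝ 2 f x‖ := by
  rw [← norm_iteratedFDeriv_fderiv, norm_iteratedFDeriv_one]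
  calc ‖fderiv ℝ (fderiv ℝ f) x v w‖ ≤ ‖fderiv ℝ (fderiv ℝ f) x‖ * ‖v‖ * ‖w‖ :=
        ContinuousLinearMap.le_opNorm₂ _ _ _
    _ ≤ ‖fderiv ℝ (fderiv ℝ f) x‖ * 1 * 1 := by gcongr
    _ = _ := by ring

theorem hasDerivAt_vec_fst (s t : ℝ) : HasDerivAt (fun s => (![s, t] : Fin 2 → ℝ)) ![1, 0] s := by
  refine hasDerivAt_pi.2 fun i => ?_
  fin_cases i
  · exact hasDerivAt_id s
  · exact hasDerivAt_const s t

theorem hasDerivAt_vec_snd (s t : ℝ) : HasDerivAt (fun t => (![s, t] : Fin 2 → ℝ)) ![0, 1] t := by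
  refine hasDerivAt_pi.2 fun i => ?_
  fin_cases i
  · exact hasDerivAt_const t s
  · exact hasDerivAt_id t

variable {f : (Fin 2 → ℝ) → F} {f' : (Fin 2 → ℝ) →L[ℝ] F} {s t : ℝ}

theorem HasFDerivAt.hasDerivAt_vec_fst (h : HasFDerivAt f f' ![s, t]) :
    HasDerivAt (fun s => f ![s, t]) (f' ![1, 0]) s :=
  h.comp_hasDerivAt s (_root_.hasDerivAt_vec_fst s t)

theorem HasFDerivAt.hasDerivAt_vec_snd (h : HasFDerivAt f f' ![s, t]) :
    HasDerivAt (fun t => f ![s, t]) (f' ![0, 1]) t :=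
  h.comp_hasDerivAt t (_root_.hasDerivAt_vec_snd s t)

theorem ContDiff.hasDerivAt_fderiv_apply_vec_fst (hf : ContDiff ℝ 2 f) (v : Fin 2 → ℝ) (s t : ℝ) :
    HasDerivAt (fun s => fderiv ℝ f ![s, t] v) (fderiv ℝ (fderiv ℝ f) ![s, t] ![1, 0] v) s := by
  simpa using (hf.hasFDerivAt_fderiv _).hasDerivAt_vec_fst.clm_apply (hasDerivAt_const s v)

theorem ContDiff.hasDerivAt_fderiv_apply_vec_snd (hf : ContDiff ℝ 2 f) (v : Fin 2 → ℝ) (s t : ℝ) :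
    HasDerivAt (fun t => fderiv ℝ f ![s, t] v) (fderiv ℝ (fderiv ℝ f) ![s, t] ![0, 1] v) t := by
  simpa using (hf.hasFDerivAt_fderiv _).hasDerivAt_vec_snd.clm_apply (hasDerivAt_const t v)

end Calculus

namespace IsPeriodic2

variable {V : Type*} {g : (Fin 2 → ℝ) → V}

theorem fderiv {u : (Fin 2 → ℝ) → ℝ} (hp : IsPeriodic2 u) : IsPeriodic2 (fderiv ℝ u) := by
  intro x k
  rw [← fderiv_comp_add_right]
  congr 1
  exact funext fun y => hp y k

theorem apply_one_vec (hp : IsPeriodic2 g) (t : ℝ) : g ![1, t] = g ![0, t] := by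
  have hshift : ![0, t] + (fun i => ((![1, 0] i : ℤ) : ℝ)) = ![1, t] := by
    ext i; fin_cases i <;> simp
  rw [← hshift, hp]

theorem apply_vec_one (hp : IsPeriodic2 g) (s : ℝ) : g ![s, 1] = g ![s, 0] := by
  have hshift : ![s, 0] + (fun i => ((![0, 1] i : ℤ) : ℝ)) = ![s, 1] := by
    ext i; fin_cases i <;> simp
  rw [← hshift, hp]

theorem apply_fract (hp : IsPeriodic2 g) (x : Fin 2 → ℝ) : g x = g fun i => Int.fract (x i) := by
  have hshift : (fun i => Int.fract (x i)) + (fun i => (⌊x i⌋ : ℝ)) = x :=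
    funext fun i => Int.fract_add_floor (x i)
  rw [← hp (fun i => Int.fract (x i)) fun i => ⌊x i⌋, hshift]

end IsPeriodic2

local notation "∂₁" u:max => fun z => fderiv ℝ u z ![1, 0]
local notation "∂₂" u:max => fun z => fderiv ℝ u z ![0, 1]
local notation "∂₁∂₁" u:max => fun z => fderiv ℝ (fderiv ℝ u) z ![1, 0] ![1, 0]
local notation "∂₂∂₁" u:max => fun z => fderiv ℝ (fderiv ℝ u) z ![0, 1] ![1, 0]
local notation "∂₂∂₂" u:max => fun z => fderiv ℝ (fderiv ℝ u) z ![0, 1] ![0, 1]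

section Agmon

variable {u : (Fin 2 → ℝ) → ℝ}

theorem L2Norm2_fderiv_fderiv_apply_le_H2Norm2 (hu : ContDiff ℝ 2 u) {v w : Fin 2 → ℝ}
    (hv : ‖v‖ ≤ 1) (hw : ‖w‖ ≤ 1) :
    L2Norm2 (fun z => fderiv ℝ (fderiv ℝ u) z v w) ≤ H2Norm2 u :=
  (L2Norm2_le_of_abs_le (hu.continuous_iteratedFDeriv le_rfl).norm fun _ => by
    rw [abs_norm, ← Real.norm_eq_abs]; exact norm_fderiv_fderiv_apply_le u hv hw).trans
    (L2Norm2_norm_iteratedFDeriv_le_H2Norm2 u (by norm_num))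

theorem sq_L2Norm2_fderiv_apply_fst_le (hu : ContDiff ℝ 2 u) (hp : IsPeriodic2 u) :
    L2Norm2 (∂₁ u) ^ 2 ≤ L2Norm2 u * L2Norm2 (∂₁∂₁ u) :=
  sq_L2Norm2_le_of_setIntegral_sq_eq_neg hu.continuous
    (hu.continuous_fderiv_fderiv_apply_const _ _)
    (setIntegral_box2_sq_eq_neg_of_hasDerivAt_fst hu.continuous
      ((hu.of_le one_le_two).continuous_fderiv_apply_const _)
      (hu.continuous_fderiv_fderiv_apply_const _ _)
      (fun _ _ => (hu.differentiable two_ne_zero _).hasFDerivAt.hasDerivAt_vec_fst)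
      (hu.hasDerivAt_fderiv_apply_vec_fst _) hp.apply_one_vec
      (fun _ => by rw [hp.fderiv.apply_one_vec]))

theorem sq_L2Norm2_fderiv_apply_snd_le (hu : ContDiff ℝ 2 u) (hp : IsPeriodic2 u) :
    L2Norm2 (∂₂ u) ^ 2 ≤ L2Norm2 u * L2Norm2 (∂₂∂₂ u) :=
  sq_L2Norm2_le_of_setIntegral_sq_eq_neg hu.continuous
    (hu.continuous_fderiv_fderiv_apply_const _ _)
    (setIntegral_box2_sq_eq_neg_of_hasDerivAt_snd hu.continuous
      ((hu.of_le one_le_two).continuous_fderiv_apply_const _)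
      (hu.continuous_fderiv_fderiv_apply_const _ _)
      (fun _ _ => (hu.differentiable two_ne_zero _).hasFDerivAt.hasDerivAt_vec_snd)
      (hu.hasDerivAt_fderiv_apply_vec_snd _) hp.apply_vec_one
      (fun _ => by rw [hp.fderiv.apply_vec_one]))

theorem sq_le_L2Norm2_mul_L2Norm2_of_mem_Icc (hu : ContDiff ℝ 2 u) {x y : ℝ}
    (hx : x ∈ Icc (0 : ℝ) 1) (hy : y ∈ Icc (0 : ℝ) 1) :
    u ![x, y] ^ 2 ≤ L2Norm2 u ^ 2 + 2 * (L2Norm2 u * L2Norm2 (∂₂ u)) +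
      (2 * (L2Norm2 u * L2Norm2 (∂₁ u)) +
        2 * (L2Norm2 (∂₂ u) * L2Norm2 (∂₁ u) + L2Norm2 u * L2Norm2 (∂₂∂₁ u))) := by
  have hc := hu.continuous
  have hc₁ := (hu.of_le one_le_two).continuous_fderiv_apply_const ![1, 0]
  have hc₂ := (hu.of_le one_le_two).continuous_fderiv_apply_const ![0, 1]
  have hc₂₁ := hu.continuous_fderiv_fderiv_apply_const ![0, 1] ![1, 0]
  have hdu (z : Fin 2 → ℝ) : HasFDerivAt u (fderiv ℝ u z) z :=
    (hu.differentiable two_ne_zero z).hasFDerivAt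
  have key := abs_le_setIntegral_box2_of_hasDerivAt (G := fun z => u z ^ 2)
    (G₁ := fun z => 2 * (u z * fderiv ℝ u z ![1, 0]))
    (G₂ := fun z => 2 * (u z * fderiv ℝ u z ![0, 1]))
    (G₁₂ := fun z => 2 * (fderiv ℝ u z ![0, 1] * fderiv ℝ u z ![1, 0] +
      u z * fderiv ℝ (fderiv ℝ u) z ![0, 1] ![1, 0]))
    (by fun_prop) (by fun_prop) (by fun_prop) (by fun_prop)
    (fun _ _ => ((hdu _).hasDerivAt_vec_fst.pow 2).congr_deriv (by ring))
    (fun _ _ => ((hdu _).hasDerivAt_vec_snd.pow 2).congr_deriv (by ring))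
    (fun s t => (((hdu _).hasDerivAt_vec_snd.mul
      (hu.hasDerivAt_fderiv_apply_vec_snd _ s t)).const_mul 2).congr_deriv (by ring)) hx hy
  have hsum := setIntegral_box2_abs_add_le (hc₂.fun_mul hc₁) (hc.fun_mul hc₂₁)
  simp only [abs_sq, abs_mul, abs_two, integral_const_mul, ← sq_L2Norm2] at key hsum
  have h₁ := setIntegral_box2_abs_mul_le hc hc₁
  have h₂ := setIntegral_box2_abs_mul_le hc hc₂
  have h₂₁ := setIntegral_box2_abs_mul_le hc₂ hc₁
  have h₀₂₁ := setIntegral_box2_abs_mul_le hc hc₂₁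
  simp only [abs_mul] at h₁ h₂ h₂₁ h₀₂₁
  linarith

theorem sq_le_nine_mul_of_mem_Icc (hu : ContDiff ℝ 2 u) (hp : IsPeriodic2 u) {x y : ℝ}
    (hx : x ∈ Icc (0 : ℝ) 1) (hy : y ∈ Icc (0 : ℝ) 1) :
    u ![x, y] ^ 2 ≤ 9 * (L2Norm2 u * H2Norm2 u) := by
  have he₁ : ‖(![1, 0] : Fin 2 → ℝ)‖ ≤ 1 := by simp [Pi.norm_def]
  have he₂ : ‖(![0, 1] : Fin 2 → ℝ)‖ ≤ 1 := by simp [Pi.norm_def]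
  have ha := L2Norm2_nonneg u
  have hab := L2Norm2_le_H2Norm2 u
  have hP₁ := L2Norm2_nonneg (∂₁ u)
  have hP₂ := L2Norm2_nonneg (∂₂ u)
  have hP₁sq := (sq_L2Norm2_fderiv_apply_fst_le hu hp).trans
    (mul_le_mul_of_nonneg_left (L2Norm2_fderiv_fderiv_apply_le_H2Norm2 hu he₁ he₁) ha)
  have hP₂sq := (sq_L2Norm2_fderiv_apply_snd_le hu hp).trans
    (mul_le_mul_of_nonneg_left (L2Norm2_fderiv_fderiv_apply_le_H2Norm2 hu he₂ he₂) ha)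
  have hQ₂₁ := L2Norm2_fderiv_fderiv_apply_le_H2Norm2 hu he₂ he₁
  have hP₁b : L2Norm2 (∂₁ u) ≤ H2Norm2 u := by nlinarith
  have hP₂b : L2Norm2 (∂₂ u) ≤ H2Norm2 u := by nlinarith
  -- the coefficients 1 + 2 + 2 + 2 + 2 of the bound give the 9; the mixed product
  -- `‖∂₂u‖ ‖∂₁u‖ ≤ ‖u‖ ‖u‖_{H²}` is AM-GM applied to `‖∂ᵢu‖² ≤ ‖u‖ ‖u‖_{H²}`
  nlinarith [sq_le_L2Norm2_mul_L2Norm2_of_mem_Icc hu hx hy,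
    sq_nonneg (L2Norm2 (∂₁ u) - L2Norm2 (∂₂ u)),
    mul_le_mul_of_nonneg_left hP₁b ha, mul_le_mul_of_nonneg_left hP₂b ha,
    mul_le_mul_of_nonneg_left hQ₂₁ ha, mul_le_mul_of_nonneg_left hab ha]

theorem abs_le_three_mul_sqrt_mul_sqrt (hu : ContDiff ℝ 2 u) (hp : IsPeriodic2 u)
    (p : Fin 2 → ℝ) : |u p| ≤ 3 * √(L2Norm2 u) * √(H2Norm2 u) := by
  have hfract : (fun i => Int.fract (p i)) = ![Int.fract (p 0), Int.fract (p 1)] := by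
    ext i; fin_cases i <;> rfl
  have hsq := sq_le_nine_mul_of_mem_Icc hu hp
    ⟨Int.fract_nonneg (p 0), (Int.fract_lt_one _).le⟩
    ⟨Int.fract_nonneg (p 1), (Int.fract_lt_one _).le⟩
  rw [hp.apply_fract p, hfract]
  calc _ ≤ √(9 * (L2Norm2 u * H2Norm2 u)) := Real.abs_le_sqrt hsq
    _ = 3 * √(L2Norm2 u) * √(H2Norm2 u) := by
        rw [Real.sqrt_mul (by norm_num), Real.sqrt_mul (L2Norm2_nonneg u),
          show (9 : ℝ) = 3 ^ 2 by norm_num, Real.sqrt_sq (by norm_num), mul_assoc]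

end Agmon

/-- The two-dimensional Agmon inequality:
`‖u‖_{L∞} ≤ C ‖u‖_{L²}^{1/2} ‖u‖_{H²}^{1/2}` on `T²`, with `C` independent of `u`. -/
theorem agmon_inequality_dim2 :
    ∃ C : ℝ, 0 < C ∧ ∀ u : (Fin 2 → ℝ) → ℝ, ContDiff ℝ 2 u → IsPeriodic2 u →
      LinfNorm2 u ≤ C * L2Norm2 u ^ ((1 : ℝ) / 2) * H2Norm2 u ^ ((1 : ℝ) / 2) := by
  refine ⟨3, by norm_num, fun u hu hp => ?_⟩
  simp only [← Real.sqrt_eq_rpow]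
  exact Real.iSup_le (abs_le_three_mul_sqrt_mul_sqrt hu hp) (by positivity)
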